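/- Let L > 0, let p_d ∈ ℝ³ with ‖p_d‖ = L, and let p : ℝ → ℝ³ be a curve with ‖p(t)‖ = L for all t, differentiable at t₀ with derivative v := p'(t₀), and such that p(t₀) × p_d ≠ 0. Then the function t ↦ L · arccos(⟨p(t), p_d⟩ / L²) is differentiable at t₀ with derivative −⟨v, t̂⟩, where t̂ := ((p(t₀) × p_d) × p(t₀)) / ‖(p(t₀) × p_d) × p(t₀)‖. -/

import Mathlib

open Matrix

/-- Euclidean norm on `ℝ³` (as `Fin 3 → ℝ`). -/
noncomputable def norm3 (v : Fin 3 → ℝ) : ℝ := Real.sqrt (∑ i, v i ^ 2)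

/-- Euclidean inner product on `ℝ³` (as `Fin 3 → ℝ`). -/
def inner3 (v w : Fin 3 → ℝ) : ℝ := ∑ i, v i * w i

/-!
Since `‖p t‖` is constant, `v ⟂ p t₀`. The vector triple product expansion gives
`(p × p_d) × p = L² p_d - ⟨p, p_d⟩ p`, so pairing with `v` yields `L² ⟨v, p_d⟩`, and Lagrange's
identity gives `‖(p × p_d) × p‖ = L √(L⁴ - ⟨p, p_d⟩²)`, nonzero because `p × p_d ≠ 0`.
The chain rule with `arccos' x = -1 / √(1 - x²)` produces exactly the same quotient.
-/

theorem inner3_eq_dotProduct (v w : Fin 3 → ℝ) : inner3 v w = v ⬝ᵥ w := rfl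

theorem norm3_eq_sqrt_dotProduct_self (v : Fin 3 → ℝ) : norm3 v = √(v ⬝ᵥ v) := by
  simp only [norm3, dotProduct, sq]

theorem dotProduct_self_eq_sq_of_norm3_eq {v : Fin 3 → ℝ} {r : ℝ} (h : norm3 v = r) :
    v ⬝ᵥ v = r ^ 2 := by
  rw [← h, norm3_eq_sqrt_dotProduct_self, Real.sq_sqrt]
  exact Finset.sum_nonneg fun i _ => mul_self_nonneg (v i)

section CrossProduct

variable {R : Type*} [CommRing R]

theorem cross_dot_cross_self (a b : Fin 3 → R) :
    a ⨯₃ b ⬝ᵥ a ⨯₃ b = (a ⬝ᵥ a) * (b ⬝ᵥ b) - (a ⬝ᵥ b) ^ 2 := by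
  rw [cross_dot_cross, dotProduct_comm b a, sq]

theorem cross_cross_self_dot_self (a b : Fin 3 → R) :
    a ⨯₃ b ⨯₃ a ⬝ᵥ a ⨯₃ b ⨯₃ a = (a ⬝ᵥ a) * ((a ⬝ᵥ a) * (b ⬝ᵥ b) - (a ⬝ᵥ b) ^ 2) := by
  rw [cross_dot_cross, cross_dot_cross_self, dotProduct_comm (a ⨯₃ b) a, dot_self_cross]
  ring

end CrossProduct

theorem HasDerivAt.dotProduct {ι : Type*} [Fintype ι] {f g : ℝ → ι → ℝ} {f' g' : ι → ℝ} {t : ℝ}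
    (hf : HasDerivAt f f' t) (hg : HasDerivAt g g' t) :
    HasDerivAt (fun s => f s ⬝ᵥ g s) (f' ⬝ᵥ g t + f t ⬝ᵥ g') t := by
  have := HasDerivAt.fun_sum (u := Finset.univ) fun i _ =>
    (hasDerivAt_pi.mp hf i).fun_mul (hasDerivAt_pi.mp hg i)
  unfold _root_.dotProduct
  simpa only [Finset.sum_add_distrib] using this

theorem HasDerivAt.dotProduct_eq_zero_of_dotProduct_self_eq {ι : Type*} [Fintype ι]
    {f : ℝ → ι → ℝ} {f' : ι → ℝ} {t c : ℝ} (hf : HasDerivAt f f' t)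
    (hc : ∀ s, f s ⬝ᵥ f s = c) : f' ⬝ᵥ f t = 0 := by
  have h := hf.dotProduct hf
  rw [funext hc, dotProduct_comm (f t)] at h
  linarith [(hasDerivAt_const t c).unique h]

theorem HasDerivAt.mul_arccos_div_sq {f : ℝ → ℝ} {f' t L : ℝ} (hL : 0 < L)
    (hf : HasDerivAt f f' t) (ht : 0 < L ^ 2 * L ^ 2 - f t ^ 2) :
    HasDerivAt (fun s => L * Real.arccos (f s / L ^ 2))
      (-(L * f' / √(L ^ 2 * L ^ 2 - f t ^ 2))) t := by
  have hsq : 1 - (f t / L ^ 2) ^ 2 = (L ^ 2 * L ^ 2 - f t ^ 2) / (L ^ 2) ^ 2 := by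
    field_simp
  have hpos : 0 < 1 - (f t / L ^ 2) ^ 2 := by rw [hsq]; positivity
  have hne_one : f t / L ^ 2 ≠ 1 := by rintro h; simp [h] at hpos
  have hne_neg_one : f t / L ^ 2 ≠ -1 := by rintro h; simp [h] at hpos
  refine (((Real.hasDerivAt_arccos hne_neg_one hne_one).comp t (hf.div_const _)).const_mul
    L).congr_deriv ?_
  rw [hsq, Real.sqrt_div ht.le, Real.sqrt_sq (by positivity)]
  field_simp

theorem inner3_smul_cross_cross_self {a b v : Fin 3 → ℝ} {L : ℝ} (hL : 0 < L)
    (ha : a ⬝ᵥ a = L ^ 2) (hb : b ⬝ᵥ b = L ^ 2) (hva : v ⬝ᵥ a = 0) :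
    inner3 v ((norm3 (a ⨯₃ b ⨯₃ a))⁻¹ • a ⨯₃ b ⨯₃ a) =
      L * (v ⬝ᵥ b) / √(L ^ 2 * L ^ 2 - (a ⬝ᵥ b) ^ 2) := by
  have hnorm : norm3 (a ⨯₃ b ⨯₃ a) = L * √(L ^ 2 * L ^ 2 - (a ⬝ᵥ b) ^ 2) := by
    rw [norm3_eq_sqrt_dotProduct_self, cross_cross_self_dot_self, ha, hb,
      Real.sqrt_mul (by positivity), Real.sqrt_sq hL.le]
  have hvw : v ⬝ᵥ a ⨯₃ b ⨯₃ a = L ^ 2 * (v ⬝ᵥ b) := by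
    rw [cross_cross_eq_smul_sub_smul, dotProduct_sub, dotProduct_smul, dotProduct_smul, ha, hva,
      smul_eq_mul, smul_zero, sub_zero]
  rw [inner3_eq_dotProduct, dotProduct_smul, smul_eq_mul, hvw, hnorm]
  field_simp

/-- Derivative of the great-circle distance along a curve on the sphere of radius `L`:
`d/dt (L arccos(⟨p(t), p_d⟩/L²)) = -⟨ṗ, t̂⟩` with
`t̂ = ((p × p_d) × p)/‖(p × p_d) × p‖`. -/
theorem stmt9 (L : ℝ) (hL : 0 < L) (pd : Fin 3 → ℝ) (hpd : norm3 pd = L)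
    (p : ℝ → Fin 3 → ℝ) (hp : ∀ t, norm3 (p t) = L) (t₀ : ℝ) (v : Fin 3 → ℝ)
    (hv : HasDerivAt p v t₀) (hc : crossProduct (p t₀) pd ≠ 0) :
    HasDerivAt (fun t => L * Real.arccos (inner3 (p t) pd / L ^ 2))
      (-inner3 v ((norm3 (crossProduct (crossProduct (p t₀) pd) (p t₀)))⁻¹ •
        crossProduct (crossProduct (p t₀) pd) (p t₀))) t₀ := by
  have ha := dotProduct_self_eq_sq_of_norm3_eq (hp t₀)
  have hb := dotProduct_self_eq_sq_of_norm3_eq hpd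
  have hva : v ⬝ᵥ p t₀ = 0 :=
    hv.dotProduct_eq_zero_of_dotProduct_self_eq fun t => dotProduct_self_eq_sq_of_norm3_eq (hp t)
  have hpos : 0 < L ^ 2 * L ^ 2 - (p t₀ ⬝ᵥ pd) ^ 2 := by
    have hlagrange := cross_dot_cross_self (p t₀) pd
    rw [ha, hb] at hlagrange
    rw [← hlagrange]
    simpa using dotProduct_self_star_pos_iff.mpr hc
  rw [inner3_smul_cross_cross_self hL ha hb hva]
  refine ((hv.dotProduct (hasDerivAt_const t₀ pd)).mul_arccos_div_sq hL hpos).congr_deriv ?_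
  rw [dotProduct_zero, add_zero]
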